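/- arXiv:2112.03548 — 5 statements merged into one kernel-verified Lean document; each statement's English description precedes it below -/
import Mathlib

section
/- Suppose x, y ∈ [0,1]^n satisfy Σᵢ xᵢ ≥ n/2, Σᵢ yᵢ ≥ n/2, and ‖x − y‖₁ ≤ β·n for some β ≤ 1/10. Let x̄ = x/‖x‖₁ and ȳ = y/‖y‖₁ be the normalized versions of x and y. Then ‖x̄ − ȳ‖₁ ≤ 6β. -/
open Finset

/-- If `x, y ∈ [0,1]^n` have `∑ xᵢ, ∑ yᵢ ≥ n/2` and `‖x - y‖₁ ≤ β n` for some
`β ≤ 1/10`, then the normalized vectors `x̄ = x/‖x‖₁`, `ȳ = y/‖y‖₁` satisfy `‖x̄ - ȳ‖₁ ≤ 6β`. -/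
theorem normalized_vs_unnormalized (n : ℕ) (hn : 0 < n) (x y : Fin n → ℝ)
    (hx : ∀ i, x i ∈ Set.Icc (0 : ℝ) 1) (hy : ∀ i, y i ∈ Set.Icc (0 : ℝ) 1)
    (β : ℝ) (hβ0 : 0 ≤ β) (hβ : β ≤ 1 / 10)
    (hxsum : (n : ℝ) / 2 ≤ ∑ i, x i) (hysum : (n : ℝ) / 2 ≤ ∑ i, y i)
    (hl1 : ∑ i, |x i - y i| ≤ β * n) :
    ∑ i, |x i / (∑ j, |x j|) - y i / (∑ j, |y j|)| ≤ 6 * β := by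
  have hXeq : ∑ j, |x j| = ∑ j, x j :=
    Finset.sum_congr rfl fun j _ => abs_of_nonneg (hx j).1
  have hYeq : ∑ j, |y j| = ∑ j, y j :=
    Finset.sum_congr rfl fun j _ => abs_of_nonneg (hy j).1
  set X := ∑ j, |x j| with hXdef
  set Y := ∑ j, |y j| with hYdef
  clear_value X Y
  have hn0 : (0:ℝ) < n := Nat.cast_pos.mpr hn
  have hXge : (n:ℝ)/2 ≤ X := hXeq ▸ hxsum
  have hYge : (n:ℝ)/2 ≤ Y := hYeq ▸ hysum
  have hXpos : 0 < X := lt_of_lt_of_le (by linarith) hXge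
  have hYpos : 0 < Y := lt_of_lt_of_le (by linarith) hYge
  have hXY : |X - Y| ≤ β * n := by
    rw [hXeq, hYeq, ← Finset.sum_sub_distrib]
    exact le_trans (Finset.abs_sum_le_sum_abs _ _) hl1
  have key : ∀ i, |x i / X - y i / Y| ≤ |x i - y i| / X + y i * |X - Y| / (X * Y) := by
    intro i
    have h1 : x i / X - y i / Y = (x i - y i)/X + y i * (Y - X)/(X*Y) := by
      field_simp; ring
    rw [h1]
    calc |(x i - y i)/X + y i * (Y - X)/(X*Y)|
        ≤ |(x i - y i)/X| + |y i * (Y - X)/(X*Y)| := abs_add_le _ _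
      _ = |x i - y i|/X + y i * |X - Y|/(X*Y) := by
          rw [abs_div, abs_div, abs_mul, abs_of_nonneg hXpos.le,
            abs_of_nonneg (mul_pos hXpos hYpos).le, abs_of_nonneg (hy i).1,
            abs_sub_comm Y X]
  have hsum : ∑ i, |x i / X - y i / Y| ≤ (∑ i, |x i - y i|)/X + Y * |X - Y|/(X*Y) := by
    calc ∑ i, |x i / X - y i / Y|
        ≤ ∑ i, (|x i - y i| / X + y i * |X - Y| / (X * Y)) :=
          Finset.sum_le_sum (fun i _ => key i)
      _ = (∑ i, |x i - y i|)/X + Y * |X - Y|/(X*Y) := by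
          rw [Finset.sum_add_distrib, ← Finset.sum_div, ← Finset.sum_div,
            ← Finset.sum_mul, ← hYeq]
  have h2 : Y * |X - Y| / (X*Y) = |X - Y| / X := by
    field_simp
  rw [h2] at hsum
  have hb1 : (∑ i, |x i - y i|)/X ≤ β*n/X := by gcongr
  have hb2 : |X - Y|/X ≤ β*n/X := by gcongr
  have hfin : β*n/X + β*n/X ≤ 6*β := by
    rw [← add_div, div_le_iff₀ hXpos]
    nlinarith
  linarith [hsum, hb1, hb2, hfin]
end

section
/- Let Δ > 0, ε > 0, and δ ∈ (0,1). Set μ₀ = −Δ·(1 + ln(1/δ)/ε) and b = Δ/ε. Let a, a' be real numbers with |a − a'| ≤ Δ, and let p and q be the probability densities on ℝ of a + X and a' + X respectively, where X ~ tLap(μ₀, b) (so p(x) is the tLap(μ₀,b) density evaluated at x − a, and similarly for q). Then D_{e^ε}(p, q) ≤ δ. (This is the hockey-stick divergence content of the Truncated Laplace Mechanism lemma: adding tLap(−Δ(1+ln(1/δ)/ε), Δ/ε) noise to a sensitivity-Δ real-valued function yields an (ε,δ)-differentially private mechanism.) -/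
open MeasureTheory Real

/-- Density of the (negatively) truncated Laplace distribution `tLap(μ, b)`:
`Lap(μ, b)` conditioned on being negative. -/
noncomputable def tLapPdf (μ b : ℝ) (x : ℝ) : ℝ :=
  if x < 0 then (1 / (2 * b)) * Real.exp (-|x - μ| / b) / (1 - (1 / 2) * Real.exp (μ / b))
  else 0

lemma tLapPdf_measurable (μ b : ℝ) : Measurable (tLapPdf μ b) := by
  unfold tLapPdf
  apply Measurable.ite (measurableSet_lt measurable_id measurable_const)
  · fun_prop
  · exact measurable_const

/-- (Truncated Laplace mechanism.) For `Δ, ε > 0`, `δ ∈ (0,1)`,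
`μ₀ = -Δ(1 + ln(1/δ)/ε)`, `b = Δ/ε`, and reals `a, a'` with `|a - a'| ≤ Δ`, the densities
`p, q` of `a + X` and `a' + X` for `X ~ tLap(μ₀, b)` satisfy `D_{e^ε}(p, q) ≤ δ`. -/
theorem truncated_laplace_mechanism (Δ ε δ : ℝ) (hΔ : 0 < Δ) (hε : 0 < ε)
    (hδ : δ ∈ Set.Ioo (0 : ℝ) 1) (a a' : ℝ) (hsens : |a - a'| ≤ Δ) :
    (∫ x : ℝ,
        max (tLapPdf (-Δ * (1 + Real.log (1 / δ) / ε)) (Δ / ε) (x - a) -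
            Real.exp ε * tLapPdf (-Δ * (1 + Real.log (1 / δ) / ε)) (Δ / ε) (x - a')) 0) ≤ δ := by
  obtain ⟨hδ0, hδ1⟩ := hδ
  set μ := -Δ * (1 + Real.log (1 / δ) / ε) with hμdef
  set b := Δ / ε with hbdef
  have hbpos : 0 < b := div_pos hΔ hε
  set E := Real.exp (-ε) with hEdef
  have hE0 : 0 < E := Real.exp_pos _
  have hE1 : E < 1 := by
    rw [hEdef, ← Real.exp_zero]
    exact Real.exp_lt_exp.mpr (by linarith)
  have hexpμ : Real.exp (μ / b) = δ * E := by
    have h1 : μ / b = Real.log δ + (-ε) := by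
      rw [hμdef, hbdef, one_div, Real.log_inv]
      field_simp
      ring
    rw [h1, Real.exp_add, Real.exp_log hδ0, hEdef]
  set K := 1 - (1 / 2) * Real.exp (μ / b) with hKdef
  have hδE : δ * E < 1 := by nlinarith
  have hK : 0 < K := by rw [hKdef, hexpμ]; linarith
  have hL : 0 ≤ Real.log (1 / δ) := Real.log_nonneg (by rw [le_div_iff₀ hδ0]; linarith)
  have hμΔ : μ ≤ -Δ := by
    have h2 : 0 ≤ Real.log (1 / δ) / ε := div_nonneg hL hε.le
    rw [hμdef]; nlinarith
  have hf0 : ∀ u : ℝ, 0 ≤ tLapPdf μ b u := by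
    intro u
    unfold tLapPdf
    split
    · rw [← hKdef]
      apply div_nonneg _ hK.le
      positivity
    · exact le_refl 0
  have hsens' : a - a' ≤ Δ := (le_abs_self _).trans hsens
  -- pointwise bound
  have key : ∀ x : ℝ, max (tLapPdf μ b (x - a) - Real.exp ε * tLapPdf μ b (x - a')) 0
      ≤ (Set.Ico (-Δ) (0 : ℝ)).indicator (tLapPdf μ b) (x - a) := by
    intro x
    rcases lt_or_ge (x - a) 0 with hxa | hxa
    · rcases le_or_gt (-Δ) (x - a) with hge | hlt
      · rw [Set.indicator_of_mem (Set.mem_Ico.mpr ⟨hge, hxa⟩)]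
        refine max_le ?_ (hf0 _)
        have h1 := hf0 (x - a')
        nlinarith [Real.exp_pos ε]
      · rw [Set.indicator_of_notMem (fun h => absurd h.1 (not_le.mpr hlt))]
        have hxa' : x - a' < 0 := by linarith
        have hmain : tLapPdf μ b (x - a) ≤ Real.exp ε * tLapPdf μ b (x - a') := by
          unfold tLapPdf
          rw [if_pos hxa, if_pos hxa', ← hKdef]
          have habs : |x - a' - μ| - |x - a - μ| ≤ Δ := by
            have h := abs_sub_abs_le_abs_sub (x - a' - μ) (x - a - μ)
            have h2 : (x - a' - μ) - (x - a - μ) = a - a' := by ring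
            rw [h2] at h
            linarith
          have hexp : Real.exp (-|x - a - μ| / b) ≤
              Real.exp ε * Real.exp (-|x - a' - μ| / b) := by
            rw [← Real.exp_add]
            apply Real.exp_le_exp.mpr
            have h3 : (|x - a' - μ| - |x - a - μ|) / b ≤ ε := by
              rw [div_le_iff₀ hbpos, hbdef]
              have : ε * (Δ / ε) = Δ := by field_simp
              rw [this]; exact habs
            have h4 : -|x - a - μ| / b = -|x - a' - μ| / b
                + (|x - a' - μ| - |x - a - μ|) / b := by ring
            linarith
          have h2b : (0 : ℝ) ≤ 1 / (2 * b) := by positivity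
          calc 1 / (2 * b) * Real.exp (-|x - a - μ| / b) / K
              ≤ 1 / (2 * b) * (Real.exp ε * Real.exp (-|x - a' - μ| / b)) / K := by
                gcongr
            _ = Real.exp ε * (1 / (2 * b) * Real.exp (-|x - a' - μ| / b) / K) := by ring
        exact max_le (by linarith) le_rfl
    · have h0 : tLapPdf μ b (x - a) = 0 := by
        unfold tLapPdf; rw [if_neg (not_lt.mpr hxa)]
      rw [h0]
      have hm : max (0 - Real.exp ε * tLapPdf μ b (x - a')) 0 = 0 :=
        max_eq_right (by nlinarith [hf0 (x - a'), Real.exp_pos ε])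
      rw [hm]
      exact Set.indicator_nonneg (fun u _ => hf0 u) _
  -- explicit form on the interval
  set C := 1 / (2 * b) / K with hCdef
  have hfIco : ∀ t ∈ Set.Ico (-Δ) (0 : ℝ), tLapPdf μ b t = C * Real.exp ((μ - t) / b) := by
    intro t ht
    unfold tLapPdf
    rw [if_pos ht.2, ← hKdef]
    have habs : |t - μ| = t - μ := abs_of_nonneg (by linarith [ht.1])
    rw [habs, hCdef]
    have : -(t - μ) / b = (μ - t) / b := by ring
    rw [this]
    ring
  have hcont : Continuous fun t : ℝ => C * Real.exp ((μ - t) / b) := by fun_prop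
  have hIntOn : IntegrableOn (tLapPdf μ b) (Set.Ico (-Δ) 0) := by
    apply IntegrableOn.congr_fun ?_ (fun t ht => (hfIco t ht).symm) measurableSet_Ico
    exact (hcont.integrableOn_Icc).mono_set Set.Ico_subset_Icc_self
  have hgInt : Integrable fun x : ℝ =>
      (Set.Ico (-Δ) (0 : ℝ)).indicator (tLapPdf μ b) (x - a) := by
    have h1 : Integrable ((Set.Ico (-Δ) (0 : ℝ)).indicator (tLapPdf μ b)) :=
      (integrable_indicator_iff measurableSet_Ico).mpr hIntOn
    exact h1.comp_sub_right a
  have hm := tLapPdf_measurable μ b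
  have hLHSmeas : Measurable fun x : ℝ =>
      max (tLapPdf μ b (x - a) - Real.exp ε * tLapPdf μ b (x - a')) 0 :=
    ((hm.comp (measurable_id.sub_const a)).sub
      ((hm.comp (measurable_id.sub_const a')).const_mul _)).max measurable_const
  have hLHSInt : Integrable fun x : ℝ =>
      max (tLapPdf μ b (x - a) - Real.exp ε * tLapPdf μ b (x - a')) 0 := by
    apply hgInt.mono' hLHSmeas.aestronglyMeasurable
    filter_upwards with x
    rw [Real.norm_eq_abs, abs_of_nonneg (le_max_right _ _)]
    exact key x
  have step1 := integral_mono hLHSInt hgInt key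
  have step2 : ∫ x : ℝ, (Set.Ico (-Δ) (0 : ℝ)).indicator (tLapPdf μ b) (x - a)
      = ∫ t in Set.Ico (-Δ) (0 : ℝ), tLapPdf μ b t := by
    rw [integral_sub_right_eq_self ((Set.Ico (-Δ) (0 : ℝ)).indicator (tLapPdf μ b)) a]
    exact integral_indicator measurableSet_Ico
  have step3 : ∫ t in Set.Ico (-Δ) (0 : ℝ), tLapPdf μ b t
      = ∫ t in (-Δ)..(0 : ℝ), C * Real.exp ((μ - t) / b) := by
    rw [setIntegral_congr_fun measurableSet_Ico hfIco, integral_Ico_eq_integral_Ioo, ← integral_Ioc_eq_integral_Ioo,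
      ← intervalIntegral.integral_of_le (by linarith : -Δ ≤ (0 : ℝ))]
  have step4 : ∫ t in (-Δ)..(0 : ℝ), C * Real.exp ((μ - t) / b)
      = b * C * (Real.exp ((μ + Δ) / b) - Real.exp (μ / b)) := by
    have hder : ∀ t ∈ Set.uIcc (-Δ) (0 : ℝ),
        HasDerivAt (fun t => -(b * C) * Real.exp ((μ - t) / b))
          (C * Real.exp ((μ - t) / b)) t := by
      intro t _
      have h1 : HasDerivAt (fun t : ℝ => (μ - t) / b) (-1 / b) t := by
        simpa using ((hasDerivAt_const t μ).sub (hasDerivAt_id t)).div_const b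
      have h2 := (h1.exp).const_mul (-(b * C))
      have e : C * Real.exp ((μ - t) / b) = -(b * C) * (Real.exp ((μ - t) / b) * (-1 / b)) := by
        rw [show -(b * C) * (Real.exp ((μ - t) / b) * (-1 / b)) = C * Real.exp ((μ - t) / b) * (b / b) by ring, div_self hbpos.ne', mul_one]
      rw [e]; exact h2
    rw [intervalIntegral.integral_eq_sub_of_hasDerivAt hder (hcont.intervalIntegrable _ _)]
    simp only [sub_zero, sub_neg_eq_add]
    ring
  have hexpμΔ : Real.exp ((μ + Δ) / b) = δ := by
    have h1 : (μ + Δ) / b = Real.log δ := by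
      rw [hμdef, hbdef, one_div, Real.log_inv]
      field_simp
      ring
    rw [h1, Real.exp_log hδ0]
  have hval : b * C * (Real.exp ((μ + Δ) / b) - Real.exp (μ / b)) = (δ - δ * E) / (2 * K) := by
    rw [hexpμΔ, hexpμ, hCdef]
    field_simp
  have hfinal : (δ - δ * E) / (2 * K) ≤ δ := by
    rw [div_le_iff₀ (by linarith)]
    rw [hKdef, hexpμ]
    nlinarith
  calc (∫ x : ℝ, max (tLapPdf μ b (x - a) - Real.exp ε * tLapPdf μ b (x - a')) 0)
      ≤ ∫ x : ℝ, (Set.Ico (-Δ) (0 : ℝ)).indicator (tLapPdf μ b) (x - a) := step1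
    _ = (δ - δ * E) / (2 * K) := by rw [step2, step3, step4, hval]
    _ ≤ δ := hfinal
end

section
/- Suppose p, q, r are probability density functions on ℝ^d and ε > 0. Then the hockey-stick divergence satisfies the weak triangle inequality D_{e^ε}(p, r) ≤ D_{e^{ε/2}}(p, q) + e^{ε/2} · D_{e^{ε/2}}(q, r). -/
open MeasureTheory Real

/-- Weak triangle inequality for the hockey-stick divergence
`D_α(p,q) = ∫ max(p(x) - α q(x), 0) dx`: for probability densities `p, q, r` on `ℝ^d` and
`ε > 0`, `D_{e^ε}(p, r) ≤ D_{e^{ε/2}}(p, q) + e^{ε/2} · D_{e^{ε/2}}(q, r)`. -/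
theorem hockey_stick_weak_triangle (d : ℕ) (ε : ℝ) (hε : 0 < ε)
    (p q r : EuclideanSpace ℝ (Fin d) → ℝ)
    (hp0 : ∀ x, 0 ≤ p x) (hq0 : ∀ x, 0 ≤ q x) (hr0 : ∀ x, 0 ≤ r x)
    (hpm : Measurable p) (hqm : Measurable q) (hrm : Measurable r)
    (hpi : Integrable p) (hqi : Integrable q) (hri : Integrable r)
    (hp1 : ∫ x, p x = 1) (hq1 : ∫ x, q x = 1) (hr1 : ∫ x, r x = 1) :
    (∫ x, max (p x - Real.exp ε * r x) 0) ≤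
      (∫ x, max (p x - Real.exp (ε / 2) * q x) 0) +
        Real.exp (ε / 2) * ∫ x, max (q x - Real.exp (ε / 2) * r x) 0 := by
  set a := Real.exp (ε / 2) with ha
  have ha0 : 0 < a := Real.exp_pos _
  have hi1 : Integrable (fun x => max (p x - a * q x) 0) :=
    (hpi.sub (hqi.const_mul a)).pos_part
  have hi2 : Integrable (fun x => max (q x - a * r x) 0) :=
    (hqi.sub (hri.const_mul a)).pos_part
  have hi3 : Integrable (fun x => max (p x - Real.exp ε * r x) 0) :=
    (hpi.sub (hri.const_mul _)).pos_part
  have key : ∀ x, max (p x - Real.exp ε * r x) 0 ≤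
      max (p x - a * q x) 0 + a * max (q x - a * r x) 0 := by
    intro x
    have hdecomp : p x - Real.exp ε * r x = (p x - a * q x) + a * (q x - a * r x) := by
      have : Real.exp ε = a * a := by
        rw [ha, ← Real.exp_add]; ring_nf
      rw [this]; ring
    rw [hdecomp]
    have h1 : (p x - a * q x) + a * (q x - a * r x) ≤
        max (p x - a * q x) 0 + a * max (q x - a * r x) 0 := by
      gcongr
      · exact le_max_left _ _
      · exact le_max_left _ _
    calc max ((p x - a * q x) + a * (q x - a * r x)) 0
        ≤ max (max (p x - a * q x) 0 + a * max (q x - a * r x) 0) 0 := by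
          apply max_le_max h1 le_rfl
      _ = max (p x - a * q x) 0 + a * max (q x - a * r x) 0 := by
          apply max_eq_left
          positivity
  calc (∫ x, max (p x - Real.exp ε * r x) 0)
      ≤ ∫ x, (max (p x - a * q x) 0 + a * max (q x - a * r x) 0) := by
        exact integral_mono hi3 (hi1.add (hi2.const_mul a)) key
    _ = (∫ x, max (p x - a * q x) 0) + a * ∫ x, max (q x - a * r x) 0 := by
        rw [integral_add hi1 (hi2.const_mul a), MeasureTheory.integral_const_mul]
end

section
/- Let ε > 0, δ ∈ (0,1), integers d ≥ 2, t ≥ 1, and 1 ≤ d' ≤ d^t. Let β > 0 satisfy β·t ≤ 1/4 and β ≤ ε/(8·t²·d^t·ln(d^t/δ)). Let M be an invertible real d'×d' matrix all of whose singular values lie in the interval [(1−β)^{t/2}, (1+β)^{t/2}]. Let p be the density of the standard Gaussian on ℝ^{d'} and let q(v) = (1/|det(M)|)·p(M^{−1}v) be the density of M·z for z standard Gaussian on ℝ^{d'}. Then D_{e^ε}(p, q) ≤ δ. (This is the core estimate proved within the paper's tensored hockey-stick lemma, applied there with M the restriction of the Kronecker power A^{⊗t} to the d'-dimensional space of symmetric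 tensors.) -/
set_option maxHeartbeats 1000000
open MeasureTheory Real Matrix




private lemma aux_log_one_sub {x : ℝ} (hx : |x| ≤ 1/4) :
    -Real.log (1 - x) ≤ x + (4/3) * x^2 := by
  have h1 : -(1/4 : ℝ) ≤ x := (abs_le.1 hx).1
  have h2 : x ≤ 1/4 := (abs_le.1 hx).2
  have h0 : (0:ℝ) < 1 - x := by linarith
  have := Real.log_le_sub_one_of_pos (x := (1-x)⁻¹) (by positivity)
  rw [Real.log_inv] at this
  have hinv : (1-x)⁻¹ - 1 = x / (1-x) := by field_simp; ring
  rw [hinv] at this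
  have h3 : x / (1-x) ≤ x + (4/3) * x^2 := by
    rw [div_le_iff₀ h0]; nlinarith
  linarith

private lemma aux_exp_neg {a : ℝ} (ha : |a| ≤ 1/3) :
    Real.exp (-a) - 1 + a ≤ (3/4) * a^2 ∧ |Real.exp (-a) - 1| ≤ (5/4) * |a| := by
  have hna : |(-a)| ≤ 1 := by rw [abs_neg]; linarith [abs_nonneg a]
  have hb := Real.exp_bound hna (n := 2) (by norm_num)
  simp [Finset.sum_range_succ] at hb
  have hb' : |Real.exp (-a) - (1 + -a)| ≤ a^2 * (3/4) := by
    convert hb using 2; norm_num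
  have h1 := (abs_le.1 hb').1
  have h2 := (abs_le.1 hb').2
  have haa : a^2 ≤ (1/3) * |a| := by
    nlinarith [sq_abs a, abs_nonneg a, mul_le_mul_of_nonneg_right ha (abs_nonneg a)]
  refine ⟨by linarith, ?_⟩
  rw [abs_le]
  constructor
  · linarith [le_abs_self a, neg_abs_le a]
  · linarith [le_abs_self a, neg_abs_le a]

private lemma factor_bound {s a : ℝ} (hs : 0 < s) (ha : |a| ≤ 1/3) (hsa : s * |a| ≤ 1/6) :
    Real.exp (s * a - 1/8) ≤ 1 - s * (Real.exp (-a) - 1) := by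
  obtain ⟨h1, h2⟩ := aux_exp_neg ha
  set x := s * (Real.exp (-a) - 1) with hxdef
  have hxabs : |x| ≤ 5/24 := by
    rw [hxdef, abs_mul, abs_of_pos hs]
    calc s * |Real.exp (-a) - 1| ≤ s * ((5/4) * |a|) :=
      mul_le_mul_of_nonneg_left h2 hs.le
    _ = (5/4) * (s * |a|) := by ring
    _ ≤ (5/4) * (1/6) := by linarith
    _ = 5/24 := by norm_num
  have hxabs' : |x| ≤ 1/4 := hxabs.trans (by norm_num)
  have h0 : (0:ℝ) < 1 - x := by
    have := (abs_le.1 hxabs').2; linarith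
  rw [← Real.exp_log h0, Real.exp_le_exp]
  have hl := aux_log_one_sub hxabs'
  have key : s * a + x + (4/3) * x^2 ≤ 1/8 := by
    have hxa : s * a + x = s * (Real.exp (-a) - 1 + a) := by rw [hxdef]; ring
    have h5 : s * (Real.exp (-a) - 1 + a) ≤ s * ((3/4) * a^2) := by
      apply mul_le_mul_of_nonneg_left h1 hs.le
    have h6' : s * |a| * |a| ≤ (1/6) * (1/3) :=
      mul_le_mul hsa ha (abs_nonneg a) (by norm_num)
    rw [mul_assoc, abs_mul_abs_self] at h6'
    have h6 : s * ((3/4)*a^2) ≤ 1/24 := by nlinarith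
    have h7 : (4/3) * x^2 ≤ (4/3) * (5/24)^2 := by
      have : x^2 ≤ (5/24)^2 := by
        rw [← sq_abs]; exact pow_le_pow_left₀ (abs_nonneg x) hxabs 2
      linarith
    rw [hxa]
    nlinarith
  linarith


private lemma max_le_aux {a b g s : ℝ} (ha : 0 < a) (hb : 0 < b) (hs : 0 ≤ s)
    (hg : g = a * Real.exp (s * (Real.log a - Real.log b))) : max (a - b) 0 ≤ g := by
  rcases le_or_gt a b with h | h
  · rw [max_eq_right (by linarith)]
    rw [hg]; positivity
  · rw [max_eq_left (by linarith), hg]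
    have hlog : Real.log b < Real.log a := Real.log_lt_log hb h
    have h1 : 1 ≤ Real.exp (s * (Real.log a - Real.log b)) := by
      rw [← Real.exp_zero]
      exact Real.exp_le_exp.2 (by nlinarith)
    nlinarith

private noncomputable def matEquiv {n : ℕ} (U : Matrix (Fin n) (Fin n) ℝ) (h : Invertible U) :
    (Fin n → ℝ) ≃ᵐ (Fin n → ℝ) :=
  ((U.toLinearEquiv' h).toContinuousLinearEquiv.toHomeomorph).toMeasurableEquiv

private lemma matEquiv_apply {n : ℕ} (U : Matrix (Fin n) (Fin n) ℝ) (h : Invertible U)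
    (w : Fin n → ℝ) : matEquiv U h w = U *ᵥ w := by
  have : matEquiv U h w = Matrix.toLin' U w := rfl
  rw [this, Matrix.toLin'_apply]

private lemma matEquiv_measurePreserving {n : ℕ} (U : Matrix (Fin n) (Fin n) ℝ)
    (h : Invertible U) (hdet : |U.det| = 1) :
    MeasurePreserving (matEquiv U h) volume volume := by
  refine ⟨(matEquiv U h).measurable, ?_⟩
  have hc : ⇑(matEquiv U h) = ⇑(Matrix.toLin' U) := by
    funext w; rw [matEquiv_apply, Matrix.toLin'_apply]
  rw [hc, Real.map_matrix_volume_pi_eq_smul_volume_pi (by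
    intro h0; rw [h0] at hdet; simp at hdet)]
  rw [show |U.det⁻¹| = 1 by rw [abs_inv, hdet]; norm_num]
  simp

/-- (Core estimate of the tensored hockey-stick lemma.) Let `ε > 0`,
`δ ∈ (0,1)`, `d ≥ 2`, `t ≥ 1`, `1 ≤ d' ≤ d^t`, and `β > 0` with `βt ≤ 1/4` and
`β ≤ ε/(8 t² d^t ln(d^t/δ))`. If `M` is an invertible `d'×d'` real matrix all of whose
singular values (square roots of eigenvalues of `MMᵀ`) lie in `[(1-β)^{t/2}, (1+β)^{t/2}]`,
then the standard Gaussian density `p` on `ℝ^{d'}` and the density `q` of `Mz`,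
`z` standard Gaussian, satisfy `D_{e^ε}(p, q) ≤ δ`. -/
theorem tensored_hockey_stick_core (d t d' : ℕ) (hd : 2 ≤ d) (ht : 1 ≤ t)
    (hd'1 : 1 ≤ d') (hd'2 : d' ≤ d ^ t)
    (ε δ β : ℝ) (hε : 0 < ε) (hδ : δ ∈ Set.Ioo (0 : ℝ) 1) (hβ0 : 0 < β)
    (hβt : β * t ≤ 1 / 4)
    (hβ : β ≤ ε / (8 * t ^ 2 * d ^ t * Real.log ((d : ℝ) ^ t / δ)))
    (M : Matrix (Fin d') (Fin d') ℝ) (hM : IsUnit M.det)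
    (hherm : (M * Mᵀ).IsHermitian)
    (hsv : ∀ i, Real.sqrt (hherm.eigenvalues i) ∈
      Set.Icc ((1 - β) ^ ((t : ℝ) / 2)) ((1 + β) ^ ((t : ℝ) / 2))) :
    (∫ v : EuclideanSpace ℝ (Fin d'),
        max ((2 * Real.pi) ^ (-(d' : ℝ) / 2) * Real.exp (-(∑ i, v i ^ 2) / 2) -
            Real.exp ε * ((1 / |M.det|) * (2 * Real.pi) ^ (-(d' : ℝ) / 2) *
              Real.exp (-(∑ i, (M⁻¹.mulVec (fun j => v j)) i ^ 2) / 2))) 0) ≤ δ := by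
  obtain ⟨hδ0, hδ1⟩ := hδ
  -- ## numeric preliminaries
  have ht1 : (1:ℝ) ≤ (t:ℝ) := by exact_mod_cast ht
  have htpos : (0:ℝ) < t := by linarith
  have hβ14 : β ≤ 1/4 := by nlinarith
  have h1mβ : (0:ℝ) < 1 - β := by linarith
  have h1pβ : (0:ℝ) < 1 + β := by linarith
  have hd2 : (2:ℝ) ≤ (d:ℝ) := by exact_mod_cast hd
  have hdt2 : (2:ℝ) ≤ (d:ℝ)^t := by
    calc (2:ℝ) = (2:ℝ)^1 := by norm_num
    _ ≤ (2:ℝ)^t := pow_le_pow_right₀ (by norm_num) ht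
    _ ≤ (d:ℝ)^t := pow_le_pow_left₀ (by norm_num) hd2 t
  have hdtpos : (0:ℝ) < (d:ℝ)^t := by linarith
  set L := Real.log ((d:ℝ)^t / δ) with hLdef
  have hL2 : Real.log 2 ≤ L := by
    apply Real.log_le_log (by norm_num)
    rw [le_div_iff₀ hδ0]; nlinarith
  have hlog2 : (0.6931471803:ℝ) < Real.log 2 := Real.log_two_gt_d9
  have hLpos : 0 < L := by linarith
  set s := 1/(8*β*(t:ℝ)) with hsdef
  have hspos : 0 < s := by rw [hsdef]; positivity
  have hsε : (t:ℝ) * (d:ℝ)^t * L ≤ s * ε := by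
    have hden : (0:ℝ) < 8 * (t:ℝ)^2 * (d:ℝ)^t * L := by positivity
    have hβ' : β * (8 * (t:ℝ)^2 * (d:ℝ)^t * L) ≤ ε := (le_div_iff₀ hden).mp hβ
    rw [hsdef]
    rw [div_mul_eq_mul_div, one_mul, le_div_iff₀ (by positivity)]
    nlinarith
  set D := |M.det| with hDdef
  have hMdet : M.det ≠ 0 := hM.ne_zero
  have hDpos : 0 < D := abs_pos.2 hMdet
  -- ## eigenvalue facts
  set U : Matrix (Fin d') (Fin d') ℝ := (hherm.eigenvectorUnitary : Matrix (Fin d') (Fin d') ℝ)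
    with hUdef
  set lam := hherm.eigenvalues with hlamdef
  have hUU : star U * U = 1 := Unitary.coe_star_mul_self hherm.eigenvectorUnitary
  have hUU' : U * star U = 1 := Unitary.coe_mul_star_self hherm.eigenvectorUnitary
  have hlam_pos : ∀ i, 0 < lam i := by
    intro i
    have h := (hsv i).1
    have : (0:ℝ) < (1-β) ^ ((t:ℝ)/2) := Real.rpow_pos_of_pos h1mβ _
    exact Real.sqrt_pos.mp (lt_of_lt_of_le this h)
  have hsqlam : ∀ i, Real.sqrt (lam i) ^ 2 = lam i := fun i =>
    Real.sq_sqrt (hlam_pos i).le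
  have hrpow_sq : ∀ x : ℝ, 0 < x → (x ^ ((t:ℝ)/2)) ^ 2 = x ^ (t:ℝ) := by
    intro x hx
    rw [← Real.rpow_natCast (x ^ ((t:ℝ)/2)) 2, ← Real.rpow_mul hx.le]
    norm_num
  have hlam_ub : ∀ i, lam i ≤ (1+β) ^ ((t:ℝ)) := by
    intro i
    rw [← hsqlam i, ← hrpow_sq _ h1pβ]
    exact pow_le_pow_left₀ (Real.sqrt_nonneg _) (hsv i).2 2
  have hlam_lb : ∀ i, (1-β) ^ ((t:ℝ)) ≤ lam i := by
    intro i
    rw [← hsqlam i, ← hrpow_sq _ h1mβ]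
    exact pow_le_pow_left₀ (Real.rpow_nonneg h1mβ.le _) (hsv i).1 2
  set a : Fin d' → ℝ := fun i => Real.log (lam i) with hadef
  have ha_abs : ∀ i, |a i| ≤ (4/3) * (β * (t:ℝ)) := by
    intro i
    rw [abs_le]
    constructor
    · have h1 : Real.log ((1-β) ^ ((t:ℝ))) ≤ a i :=
        Real.log_le_log (Real.rpow_pos_of_pos h1mβ _) (hlam_lb i)
      rw [Real.log_rpow h1mβ] at h1
      have h2 : -Real.log (1-β) ≤ β + (4/3)*β^2 := by
        have := aux_log_one_sub (x := β) (by rw [abs_of_pos hβ0]; linarith)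
        linarith
      have h3 : -((4/3)*β) ≤ Real.log (1-β) := by
        nlinarith [mul_le_mul_of_nonneg_left hβ14 hβ0.le]
      have h4 := mul_le_mul_of_nonneg_left h3 htpos.le
      linarith
    · have h1 : a i ≤ Real.log ((1+β) ^ ((t:ℝ))) :=
        Real.log_le_log (hlam_pos i) (hlam_ub i)
      rw [Real.log_rpow h1pβ] at h1
      have h2 : Real.log (1+β) ≤ β := by
        have := Real.log_le_sub_one_of_pos h1pβ
        linarith
      have h4 := mul_le_mul_of_nonneg_left h2 htpos.le
      nlinarith [mul_nonneg hβ0.le htpos.le]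
  have hsa : ∀ i, s * |a i| ≤ 1/6 := by
    intro i
    have : s * ((4/3) * (β * (t:ℝ))) = 1/6 := by
      rw [hsdef]; field_simp; ring
    calc s * |a i| ≤ s * ((4/3) * (β * (t:ℝ))) :=
      mul_le_mul_of_nonneg_left (ha_abs i) hspos.le
    _ = 1/6 := this
  have ha13 : ∀ i, |a i| ≤ 1/3 := by
    intro i
    calc |a i| ≤ (4/3) * (β * (t:ℝ)) := ha_abs i
    _ ≤ (4/3) * (1/4) := by nlinarith
    _ = 1/3 := by norm_num
  set b : Fin d' → ℝ := fun i => 1 - s * (Real.exp (-(a i)) - 1) with hbdef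
  have hb_eq : ∀ i, b i = 1 + s - s * (lam i)⁻¹ := by
    intro i
    rw [hbdef]
    simp only
    rw [Real.exp_neg, Real.exp_log (hlam_pos i)]
    ring
  have hfb : ∀ i, Real.exp (s * a i - 1/8) ≤ b i := fun i =>
    factor_bound hspos (ha13 i) (hsa i)
  have hb_pos : ∀ i, 0 < b i := fun i => lt_of_lt_of_le (Real.exp_pos _) (hfb i)
  -- ## determinant facts
  have hlogD : Real.log D = (∑ i, a i) / 2 := by
    have hdet2 : D^2 = ∏ i, lam i := by
      have h1 : M.det * Mᵀ.det = (M * Mᵀ).det := (det_mul M Mᵀ).symm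
      have h2 : (M * Mᵀ).det = ∏ i, lam i := by
        have := hherm.det_eq_prod_eigenvalues
        simpa using this
      rw [hDdef, sq_abs, sq]
      rw [det_transpose] at h1
      rw [h1, h2]
    have h3 : Real.log (D^2) = ∑ i, a i := by
      rw [hdet2, Real.log_prod (fun i _ => (hlam_pos i).ne')]
    rw [Real.log_pow] at h3
    push_cast at h3
    linarith
  have hdetU : |U.det| = 1 := by
    have h1 : U.det * U.det = 1 := by
      have := congrArg Matrix.det hUU
      rwa [det_mul, det_one, star_eq_conjTranspose,
        conjTranspose_eq_transpose_of_trivial, det_transpose] at this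
    rcases mul_self_eq_one_iff.mp h1 with h | h <;> rw [h] <;> norm_num
  -- ## quadratic form identities
  have hdetA : (M * Mᵀ).det ≠ 0 := by
    rw [det_mul, det_transpose]
    exact mul_ne_zero hMdet hMdet
  have hAinv : (M * Mᵀ)⁻¹ * (M * Mᵀ) = 1 :=
    nonsing_inv_mul _ ((isUnit_iff_ne_zero (a := (M*Mᵀ).det)).mpr hdetA)
  have hspec : (star U) * (M * Mᵀ) * U = diagonal lam := by
    have h := hherm.conjStarAlgAut_star_eigenvectorUnitary
    rw [Unitary.conjStarAlgAut_star_apply] at h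
    simpa using h
  have hX : (star U) * (M * Mᵀ)⁻¹ * U = diagonal (fun i => (lam i)⁻¹) := by
    have hleft : ((star U) * (M * Mᵀ)⁻¹ * U) * diagonal lam = 1 := by
      rw [← hspec]
      simp only [Matrix.mul_assoc]
      rw [← Matrix.mul_assoc U (star U) (M * (Mᵀ * U)), hUU', Matrix.one_mul,
        ← Matrix.mul_assoc M Mᵀ U, ← Matrix.mul_assoc (M * Mᵀ)⁻¹ (M * Mᵀ) U, hAinv,
        Matrix.one_mul, hUU]
    have hdiaginv : (diagonal lam)⁻¹ = diagonal (fun i => (lam i)⁻¹) := by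
      apply Matrix.inv_eq_left_inv
      rw [diagonal_mul_diagonal]
      simp only [fun i => inv_mul_cancel₀ (hlam_pos i).ne']
      exact diagonal_one
    rw [← hdiaginv, Matrix.inv_eq_left_inv hleft]
  have hq2 : ∀ w : Fin d' → ℝ,
      ∑ i, (M⁻¹ *ᵥ (U *ᵥ w)) i ^ 2 = ∑ i, (lam i)⁻¹ * (w i)^2 := by
    intro w
    have hsq : ∑ i, (M⁻¹ *ᵥ (U *ᵥ w)) i ^ 2 = (((M⁻¹ * U)ᵀ * (M⁻¹ * U)) *ᵥ w) ⬝ᵥ w := by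
      have h1 : ∑ i, (M⁻¹ *ᵥ (U *ᵥ w)) i ^ 2 = ((M⁻¹ * U) *ᵥ w) ⬝ᵥ ((M⁻¹ * U) *ᵥ w) := by
        simp [dotProduct, sq, mulVec_mulVec]
      rw [h1, dotProduct_mulVec, ← mulVec_transpose, mulVec_mulVec, dotProduct_comm]
    have hcomp : (M⁻¹ * U)ᵀ * (M⁻¹ * U) = (star U) * (M * Mᵀ)⁻¹ * U := by
      rw [transpose_mul, Matrix.mul_inv_rev, ← transpose_nonsing_inv]
      rw [star_eq_conjTranspose, conjTranspose_eq_transpose_of_trivial]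
      simp only [Matrix.mul_assoc]
    rw [hsq, hcomp, hX]
    simp [dotProduct, mulVec_diagonal]
    congr 1; funext i; ring
  have hq1 : ∀ w : Fin d' → ℝ, ∑ i, (U *ᵥ w) i ^ 2 = ∑ i, (w i)^2 := by
    intro w
    have h1 : ∑ i, (U *ᵥ w) i ^ 2 = (U *ᵥ w) ⬝ᵥ (U *ᵥ w) := by
      simp [dotProduct, sq]
    rw [h1, dotProduct_mulVec, ← mulVec_transpose, mulVec_mulVec]
    rw [star_eq_conjTranspose, conjTranspose_eq_transpose_of_trivial] at hUU
    rw [hUU, one_mulVec]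
    simp [dotProduct, sq]
  -- ## the dominating function
  set c : ℝ := (2*Real.pi) ^ (-(d':ℝ)/2) with hcdef
  have hcpos : 0 < c := Real.rpow_pos_of_pos (by positivity) _
  set F : (Fin d' → ℝ) → ℝ := fun w =>
    Real.exp (-((1+s) * (∑ i, (w i)^2) - s * (∑ i, (M⁻¹ *ᵥ w) i ^ 2))/2) with hFdef
  set C : ℝ := c * Real.exp (s * (Real.log D - ε)) with hCdef
  set G : EuclideanSpace ℝ (Fin d') → ℝ := fun v => C * F (fun i => v i) with hGdef
  -- ## pointwise bound
  have hptwise : ∀ v : EuclideanSpace ℝ (Fin d'),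
      max (c * Real.exp (-(∑ i, v i ^ 2) / 2) -
        Real.exp ε * ((1 / D) * c *
          Real.exp (-(∑ i, (M⁻¹.mulVec (fun j => v j)) i ^ 2) / 2))) 0 ≤ G v := by
    intro v
    set S₁ := ∑ i, v i ^ 2 with hS₁
    set S₂ := ∑ i, (M⁻¹.mulVec (fun j => v j)) i ^ 2 with hS₂
    apply max_le_aux (by positivity) (by positivity) hspos.le
    have hlogA : Real.log (c * Real.exp (-S₁ / 2)) = Real.log c - S₁/2 := by
      rw [Real.log_mul hcpos.ne' (Real.exp_ne_zero _), Real.log_exp]; ring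
    have hlogB : Real.log (Real.exp ε * ((1 / D) * c * Real.exp (-S₂ / 2)))
        = ε - Real.log D + Real.log c - S₂/2 := by
      rw [Real.log_mul (Real.exp_ne_zero _) (by positivity),
        Real.log_mul (by positivity) (Real.exp_ne_zero _),
        Real.log_mul (by positivity) hcpos.ne',
        Real.log_exp, Real.log_exp, one_div, Real.log_inv]
      ring
    rw [hlogA, hlogB, hGdef, hCdef, hFdef]
    simp only
    rw [mul_assoc, ← Real.exp_add, mul_assoc, ← Real.exp_add]
    congr 2
    · ring
  -- ## measure-theoretic setup
  have hUinv : Invertible U := ⟨star U, hUU, hUU'⟩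
  set e1 := (MeasurableEquiv.toLp 2 (Fin d' → ℝ)).symm with he1
  have hmp1 : MeasurePreserving e1 volume volume :=
    EuclideanSpace.volume_preserving_symm_measurableEquiv_toLp (Fin d')
  set e2 := matEquiv U hUinv with he2
  have hmp2 : MeasurePreserving e2 volume volume :=
    matEquiv_measurePreserving U hUinv hdetU
  have hFe2 : ∀ w : Fin d' → ℝ, F (e2 w) = ∏ i, Real.exp (-(b i/2) * (w i)^2) := by
    intro w
    rw [he2, matEquiv_apply, hFdef]
    simp only
    rw [hq1 w, hq2 w, ← Real.exp_sum]
    congr 1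
    have hrw : ∀ i ∈ Finset.univ, -(b i / 2) * (w i)^2
        = (-((1+s)*(w i)^2) + s * ((lam i)⁻¹ * (w i)^2)) / 2 := by
      intro i _
      rw [hb_eq i]; ring
    rw [Finset.sum_congr rfl hrw, ← Finset.sum_div, Finset.sum_add_distrib,
      Finset.sum_neg_distrib, ← Finset.mul_sum, ← Finset.mul_sum]
    ring
  have hprodint : Integrable (fun w : Fin d' → ℝ => ∏ i, Real.exp (-(b i/2) * (w i)^2)) :=
    Integrable.fintype_prod (fun i => integrable_exp_neg_mul_sq (half_pos (hb_pos i)))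
  have hFint : Integrable F := by
    rw [← hmp2.integrable_comp_emb e2.measurableEmbedding]
    have : (F ∘ e2) = fun w => ∏ i, Real.exp (-(b i/2) * (w i)^2) := funext hFe2
    rw [this]
    exact hprodint
  have hGint : Integrable G := by
    have h1 : Integrable (fun v : EuclideanSpace ℝ (Fin d') => F (fun i => v i)) := by
      rw [show (fun v : EuclideanSpace ℝ (Fin d') => F (fun i => v i)) = F ∘ e1 from rfl]
      rw [hmp1.integrable_comp_emb e1.measurableEmbedding]
      exact hFint
    exact h1.const_mul C
  -- ## integral computation
  have hval : ∫ v, G v = C * ∏ i, Real.sqrt (π / (b i / 2)) := by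
    have h1 : ∫ v, G v = ∫ w : Fin d' → ℝ, C * F w := hmp1.integral_comp' (fun w => C * F w)
    have h3 : ∫ w : Fin d' → ℝ, F w = ∫ w : Fin d' → ℝ, F (e2 w) :=
      (hmp2.integral_comp' F).symm
    have h4 : ∫ w : Fin d' → ℝ, F (e2 w)
        = ∫ w : Fin d' → ℝ, ∏ i, Real.exp (-(b i/2) * (w i)^2) := by
      congr 1; exact funext hFe2
    have h5 : ∫ w : Fin d' → ℝ, ∏ i, Real.exp (-(b i/2) * (w i)^2)
        = ∏ i, ∫ x : ℝ, Real.exp (-(b i/2) * x^2) :=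
      integral_fintype_prod_eq_prod (ι := Fin d') (fun i (x:ℝ) => Real.exp (-(b i/2) * x^2))
    have h6 : ∀ i, ∫ x : ℝ, Real.exp (-(b i/2) * x^2) = Real.sqrt (π / (b i / 2)) :=
      fun i => integral_gaussian _
    rw [h1, integral_const_mul, h3, h4, h5]
    congr 1
    exact Finset.prod_congr rfl (fun i _ => h6 i)
  -- ## final numeric bound
  have hfinal : C * ∏ i, Real.sqrt (π / (b i / 2)) ≤ δ := by
    have h2πpos : (0:ℝ) < 2*π := by positivity
    have hsqrt2pi : (0:ℝ) < Real.sqrt (2*π) := Real.sqrt_pos.2 h2πpos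
    have hcpow : c = ((Real.sqrt (2*π))⁻¹) ^ (d' : ℕ) := by
      have h1 : ((2*π : ℝ)) ^ (-(1:ℝ)/2) = (Real.sqrt (2*π))⁻¹ := by
        rw [show (-(1:ℝ)/2) = -(1/2) by norm_num, Real.rpow_neg h2πpos.le,
          Real.sqrt_eq_rpow]
      rw [hcdef, ← h1, ← Real.rpow_natCast ((2*π:ℝ) ^ (-(1:ℝ)/2)) d',
        ← Real.rpow_mul h2πpos.le]
      congr 1
      ring
    have hfac : ∀ i, Real.sqrt (π / (b i / 2)) = Real.sqrt (2*π) * (Real.sqrt (b i))⁻¹ := by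
      intro i
      rw [show π / (b i / 2) = (2*π) / b i by rw [div_div_eq_mul_div]; ring_nf,
        Real.sqrt_div h2πpos.le, div_eq_mul_inv]
    have hCexp : Real.exp (s * (Real.log D - ε))
        = Real.exp (-(s*ε)) * ∏ i, Real.exp (s * a i / 2) := by
      rw [← Real.exp_sum, ← Real.exp_add]
      congr 1
      have hss : ∑ i, s * a i / 2 = s * ((∑ i, a i)/2) := by
        rw [← Finset.sum_div, ← Finset.mul_sum, mul_div_assoc]
      rw [hlogD, hss]
      ring
    have hsplit : C * ∏ i, Real.sqrt (π / (b i / 2))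
        = Real.exp (-(s*ε)) * ∏ i, ((Real.sqrt (b i))⁻¹ * Real.exp (s * a i / 2)) := by
      rw [Finset.prod_congr rfl (fun i _ => hfac i), Finset.prod_mul_distrib,
        Finset.prod_const, Finset.card_univ, Fintype.card_fin,
        hCdef, hcpow, hCexp, Finset.prod_mul_distrib]
      have hone : ((Real.sqrt (2*π))⁻¹) ^ (d' : ℕ) * (Real.sqrt (2*π)) ^ (d' : ℕ) = 1 := by
        rw [← mul_pow, inv_mul_cancel₀ hsqrt2pi.ne', one_pow]
      linear_combination (Real.exp (-(s*ε)) * (∏ i, Real.exp (s * a i / 2)) *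
        (∏ i, (Real.sqrt (b i))⁻¹)) * hone
    have hfbound : ∀ i, (Real.sqrt (b i))⁻¹ * Real.exp (s * a i / 2)
        ≤ Real.exp ((1:ℝ)/16) := by
      intro i
      have h1 : Real.exp ((s * a i - 1/8)/2) ≤ Real.sqrt (b i) := by
        rw [Real.exp_half]
        exact Real.sqrt_le_sqrt (hfb i)
      have h2 : (Real.sqrt (b i))⁻¹ ≤ Real.exp (-((s * a i - 1/8)/2)) := by
        rw [Real.exp_neg]
        exact inv_anti₀ (Real.exp_pos _) h1
      calc (Real.sqrt (b i))⁻¹ * Real.exp (s * a i / 2)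
          ≤ Real.exp (-((s * a i - 1/8)/2)) * Real.exp (s * a i / 2) :=
            mul_le_mul_of_nonneg_right h2 (Real.exp_pos _).le
        _ = Real.exp ((1:ℝ)/16) := by rw [← Real.exp_add]; congr 1; ring
    have hprod_le : ∏ i, ((Real.sqrt (b i))⁻¹ * Real.exp (s * a i / 2))
        ≤ Real.exp ((d':ℝ)/16) := by
      calc ∏ i, ((Real.sqrt (b i))⁻¹ * Real.exp (s * a i / 2))
          ≤ ∏ _i : Fin d', Real.exp ((1:ℝ)/16) :=
            Finset.prod_le_prod (fun i _ => by positivity) (fun i _ => hfbound i)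
        _ = Real.exp ((1:ℝ)/16) ^ (d' : ℕ) := by
            rw [Finset.prod_const, Finset.card_univ, Fintype.card_fin]
        _ = Real.exp ((d':ℝ)/16) := by
            rw [← Real.exp_nat_mul]
            congr 1
            ring
    have hlogδ : Real.log δ = (t:ℝ) * Real.log d - L := by
      rw [hLdef, Real.log_div (by positivity) hδ0.ne', Real.log_pow]
      push_cast
      ring
    have hd'cast : (d':ℝ) ≤ (d:ℝ)^t := by exact_mod_cast hd'2
    have hlogd : (0:ℝ) ≤ Real.log d := Real.log_nonneg (by linarith)
    have hexp_le : Real.exp (-(s*ε)) * Real.exp ((d':ℝ)/16) ≤ δ := by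
      rw [← Real.exp_add, ← Real.exp_log hδ0]
      apply Real.exp_le_exp.2
      rw [hlogδ]
      have p1 : 1 * ((d:ℝ)^t * L) ≤ (t:ℝ) * ((d:ℝ)^t * L) :=
        mul_le_mul_of_nonneg_right ht1 (by positivity)
      have p2 : (d:ℝ)^t * 0.6931471803 ≤ (d:ℝ)^t * L :=
        mul_le_mul_of_nonneg_left (by linarith) hdtpos.le
      have p3 : L * 1 ≤ L * ((d:ℝ)^t / 2) :=
        mul_le_mul_of_nonneg_left (by linarith) hLpos.le
      nlinarith
    calc C * ∏ i, Real.sqrt (π / (b i / 2))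
        = Real.exp (-(s*ε)) * ∏ i, ((Real.sqrt (b i))⁻¹ * Real.exp (s * a i / 2)) := hsplit
      _ ≤ Real.exp (-(s*ε)) * Real.exp ((d':ℝ)/16) :=
          mul_le_mul_of_nonneg_left hprod_le (Real.exp_pos _).le
      _ ≤ δ := hexp_le
  calc (∫ v : EuclideanSpace ℝ (Fin d'),
        max ((2 * Real.pi) ^ (-(d' : ℝ) / 2) * Real.exp (-(∑ i, v i ^ 2) / 2) -
            Real.exp ε * ((1 / |M.det|) * (2 * Real.pi) ^ (-(d' : ℝ) / 2) *
              Real.exp (-(∑ i, (M⁻¹.mulVec (fun j => v j)) i ^ 2) / 2))) 0)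
      ≤ ∫ v, G v := by
        apply integral_mono_of_nonneg (ae_of_all _ fun v => le_max_right _ _) hGint
        exact ae_of_all _ hptwise
    _ = C * ∏ i, Real.sqrt (π / (b i / 2)) := hval
    _ ≤ δ := hfinal
end

section
/- (Composition for algorithms with halting, two-step case.) Let 𝒴 be a set of datasets equipped with a symmetric neighbor relation, and let O₁, O₂ be measurable spaces. Let M₁ assign to each Y ∈ 𝒴 a probability measure on O₁ ⊔ {⊥}, and let M₂ assign to each pair (o₁, Y) ∈ O₁ × 𝒴 a probability measure on O₂ ⊔ {⊥} (both Markov kernels). Say Y satisfies condition Ψ₁ iff M₁(Y)({⊥}) < 1. Let M be the composed mechanism: on input Y, sample o₁ ~ M₁(Y); if o₁ = ⊥ output ⊥, otherwise output a sample from M₂(o₁, Y). Suppose (i) M₁ is (ε₁, δ₁)-DP: for all measurable S ⊆ O₁ ⊔ {⊥} and all neighboring Y, Y', M₁(Y)(S) ≤ e^{ε₁}·M₁(Y')(S) + δ₁; and (ii) M₂ is (ε₂, δ₂)-DP under condition Ψ₁: for every o₁ ∈ O₁, every measurable S ⊆ O₂ ⊔ {⊥}, and all neighboring Y, Y' both satisfying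 Ψ₁, M₂(o₁, Y)(S) ≤ e^{ε₂}·M₂(o₁, Y')(S) + δ₂. Then M is (ε₁ + ε₂, δ₁ + δ₂)-DP: for all measurable S ⊆ O₂ ⊔ {⊥} and all neighboring Y, Y', M(Y)(S) ≤ e^{ε₁+ε₂}·M(Y')(S) + δ₁ + δ₂. -/
open MeasureTheory ENNReal

/-- Measurable-space structure on `Option α` (with `none` the halting symbol `⊥`):
a set is measurable iff its preimage under `some` is measurable. -/
instance optionMeasurableSpace {α : Type*} [m : MeasurableSpace α] :
    MeasurableSpace (Option α) :=
  MeasurableSpace.map Option.some m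

/-- The composed mechanism: on input `Y`, sample `o₁ ~ M₁(Y)`; if `o₁ = ⊥` (i.e. `none`)
output `⊥`, otherwise output a sample from `M₂(o₁, Y)`.  Its probability of landing in a
set `S` of outcomes is the halting contribution plus the integral of `M₂(o₁, Y)(S)` over the
non-halting part of `M₁(Y)`. -/
noncomputable def composeMech {𝒴 O₁ O₂ : Type*} [MeasurableSpace O₁] [MeasurableSpace O₂]
    (M₁ : 𝒴 → Measure (Option O₁)) (M₂ : O₁ → 𝒴 → Measure (Option O₂))
    (Y : 𝒴) (S : Set (Option O₂)) : ℝ≥0∞ :=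
  (S.indicator (fun _ => M₁ Y {none}) none) +
    ∫⁻ o₁, M₂ o₁ Y S ∂(Measure.comap Option.some (M₁ Y))

section Helpers
variable {α : Type*} [MeasurableSpace α]

lemma measurable_some' : Measurable (Option.some : α → Option α) := fun _ h => h

lemma measurable_of_comp_some {β : Type*} [MeasurableSpace β] {F : Option α → β}
    (h : Measurable fun a => F (some a)) : Measurable F := fun t ht => h ht

lemma measurableEmbedding_some : MeasurableEmbedding (Option.some : α → Option α) := by
  refine ⟨Option.some_injective α, measurable_some', fun s _ => ?_⟩
  show MeasurableSet (Option.some ⁻¹' (Option.some '' s))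
  rwa [Set.preimage_image_eq _ (Option.some_injective α)]

lemma measurableSet_none' : MeasurableSet ({none} : Set (Option α)) := by
  show MeasurableSet (Option.some ⁻¹' {none})
  convert MeasurableSet.empty
  ext x; simp

omit [MeasurableSpace α] in
lemma compl_none : ({none} : Set (Option α))ᶜ = Set.range Option.some := by
  ext x; cases x <;> simp

lemma lintegral_option (ν : Measure (Option α)) (F : Option α → ℝ≥0∞) :
    ∫⁻ x, F x ∂ν = F none * ν {none} + ∫⁻ a, F (some a) ∂(Measure.comap Option.some ν) := by
  have h1 : ∫⁻ x in {none}, F x ∂ν = F none * ν {none} := by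
    have := setLIntegral_congr_fun (μ := ν) (f := F) (g := fun _ => F none) (s := {none})
      measurableSet_none' (fun x hx => by
        rw [Set.mem_singleton_iff] at hx; rw [hx])
    rw [this, setLIntegral_const]
  have h2 : ∫⁻ x in ({none} : Set (Option α))ᶜ, F x ∂ν
      = ∫⁻ a, F (some a) ∂(Measure.comap Option.some ν) := by
    rw [compl_none, ← measurableEmbedding_some.map_comap ν,
      measurableEmbedding_some.lintegral_map]
  rw [← lintegral_add_compl F measurableSet_none', h1, h2]

end Helpers

lemma lintegral_le_of_dp {α : Type*} [MeasurableSpace α] (μ ν : Measure α) (E d : ℝ≥0∞)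
    (hE : E ≠ ∞) (g : α → ℝ≥0∞) (hg : Measurable g) (hg1 : ∀ x, g x ≤ 1)
    (hdp : ∀ s : Set α, MeasurableSet s → μ s ≤ E * ν s + d) :
    ∫⁻ x, g x ∂μ ≤ E * ∫⁻ x, g x ∂ν + d := by
  set f : α → ℝ := fun x => (g x).toReal with hf
  have hgne : ∀ x, g x ≠ ∞ := fun x => ne_top_of_le_ne_top one_ne_top (hg1 x)
  have hof : ∀ x, ENNReal.ofReal (f x) = g x := fun x => ENNReal.ofReal_toReal (hgne x)
  have hfm : Measurable f := hg.ennreal_toReal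
  have hf1 : ∀ x, f x ≤ 1 := fun x => by
    rw [hf]; simpa using ENNReal.toReal_mono one_ne_top (hg1 x)
  have hlay : ∀ ρ : Measure α, ∫⁻ x, g x ∂ρ = ∫⁻ t in Set.Ioi (0:ℝ), ρ {a | t < f a} := by
    intro ρ
    rw [← lintegral_eq_lintegral_meas_lt ρ (ae_of_all _ fun x => ENNReal.toReal_nonneg)
      hfm.aemeasurable]
    exact lintegral_congr fun x => (hof x).symm
  rw [hlay μ, hlay ν]
  have hmeas_t : ∀ t : ℝ, MeasurableSet {a | t < f a} := fun t =>
    measurableSet_lt measurable_const hfm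
  calc ∫⁻ t in Set.Ioi (0:ℝ), μ {a | t < f a}
      ≤ ∫⁻ t in Set.Ioi (0:ℝ),
        (E * ν {a | t < f a} + Set.indicator (Set.Ioc (0:ℝ) 1) (fun _ => d) t) := by
        refine setLIntegral_mono' measurableSet_Ioi (fun t ht => ?_)
        rcases le_or_gt t 1 with h1 | h1
        · rw [Set.indicator_of_mem (Set.mem_Ioc.mpr ⟨Set.mem_Ioi.mp ht, h1⟩)]
          exact hdp _ (hmeas_t t)
        · have hemp : {a | t < f a} = ∅ := by
            ext a; simp only [Set.mem_setOf_eq, Set.mem_empty_iff_false, iff_false, not_lt]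
            exact (hf1 a).trans h1.le
          rw [hemp, measure_empty]
          exact zero_le
    _ = E * (∫⁻ t in Set.Ioi (0:ℝ), ν {a | t < f a}) + d := by
        rw [lintegral_add_right _ (measurable_const.indicator measurableSet_Ioc),
          lintegral_const_mul' _ _ hE]
        congr 1
        rw [lintegral_indicator measurableSet_Ioc, setLIntegral_const,
          Measure.restrict_apply measurableSet_Ioc]
        have hident : Set.Ioc (0:ℝ) 1 ∩ Set.Ioi 0 = Set.Ioc 0 1 := by
          rw [Set.inter_eq_left]
          exact fun x hx => hx.1
        rw [hident, Real.volume_Ioc]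
        norm_num

/-- (Composition for algorithms with halting, two-step case.)  If `M₁` is
`(ε₁,δ₁)`-DP and `M₂` is `(ε₂,δ₂)`-DP under the condition `Ψ₁` (the first step does not
surely halt, i.e. `M₁(Y)({⊥}) < 1`), then the composed mechanism is
`(ε₁+ε₂, δ₁+δ₂)`-DP. -/
theorem composition_with_halting {𝒴 O₁ O₂ : Type*}
    [MeasurableSpace O₁] [MeasurableSpace O₂]
    (Neighbor : 𝒴 → 𝒴 → Prop) (hsymm : Symmetric Neighbor)
    (M₁ : 𝒴 → Measure (Option O₁)) (M₂ : O₁ → 𝒴 → Measure (Option O₂))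
    (hM₁prob : ∀ Y, IsProbabilityMeasure (M₁ Y))
    (hM₂prob : ∀ o₁ Y, IsProbabilityMeasure (M₂ o₁ Y))
    (hM₂meas : ∀ (Y : 𝒴) (S : Set (Option O₂)), MeasurableSet S →
      Measurable fun o₁ => M₂ o₁ Y S)
    (ε₁ ε₂ δ₁ δ₂ : ℝ) (hε₁ : 0 ≤ ε₁) (hε₂ : 0 ≤ ε₂) (hδ₁ : 0 ≤ δ₁) (hδ₂ : 0 ≤ δ₂)
    (hDP₁ : ∀ (S : Set (Option O₁)), MeasurableSet S → ∀ Y Y', Neighbor Y Y' →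
      M₁ Y S ≤ ENNReal.ofReal (Real.exp ε₁) * M₁ Y' S + ENNReal.ofReal δ₁)
    (hDP₂ : ∀ (o₁ : O₁) (S : Set (Option O₂)), MeasurableSet S → ∀ Y Y', Neighbor Y Y' →
      M₁ Y {none} < 1 → M₁ Y' {none} < 1 →
      M₂ o₁ Y S ≤ ENNReal.ofReal (Real.exp ε₂) * M₂ o₁ Y' S + ENNReal.ofReal δ₂) :
    ∀ (S : Set (Option O₂)), MeasurableSet S → ∀ Y Y', Neighbor Y Y' →
      composeMech M₁ M₂ Y S ≤
        ENNReal.ofReal (Real.exp (ε₁ + ε₂)) * composeMech M₁ M₂ Y' S +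
          ENNReal.ofReal (δ₁ + δ₂) := by
  intro S hS Y Y' hN
  classical
  haveI := hM₁prob Y; haveI := hM₁prob Y'
  set E₁ := ENNReal.ofReal (Real.exp ε₁) with hE₁def
  set E₂ := ENNReal.ofReal (Real.exp ε₂) with hE₂def
  have hE₁1 : (1:ℝ≥0∞) ≤ E₁ := by
    rw [hE₁def, ← ENNReal.ofReal_one]
    exact ENNReal.ofReal_le_ofReal (Real.one_le_exp hε₁)
  have hE₂1 : (1:ℝ≥0∞) ≤ E₂ := by
    rw [hE₂def, ← ENNReal.ofReal_one]
    exact ENNReal.ofReal_le_ofReal (Real.one_le_exp hε₂)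
  have hE₁₂ : ENNReal.ofReal (Real.exp (ε₁ + ε₂)) = E₁ * E₂ := by
    rw [Real.exp_add, ENNReal.ofReal_mul (Real.exp_nonneg _)]
  have hE₁₂1 : (1:ℝ≥0∞) ≤ E₁ * E₂ := le_trans hE₁1 (le_mul_of_one_le_right zero_le hE₂1)
  have hδsum : ENNReal.ofReal (δ₁ + δ₂) = ENNReal.ofReal δ₁ + ENNReal.ofReal δ₂ :=
    ENNReal.ofReal_add hδ₁ hδ₂
  set c : ℝ≥0∞ := S.indicator (fun _ => 1) none with hcdef
  have hc1 : c ≤ 1 := by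
    rw [hcdef]; exact Set.indicator_le' (fun _ _ => le_refl _) (fun _ _ => zero_le) none
  -- expansion of composeMech as a single lintegral
  have hexp : ∀ Z, composeMech M₁ M₂ Z S
      = ∫⁻ x, Option.elim x c (fun o₁ => M₂ o₁ Z S) ∂(M₁ Z) := by
    intro Z
    rw [lintegral_option]
    show composeMech M₁ M₂ Z S = c * M₁ Z {none} + _
    unfold composeMech
    congr 1
    rw [hcdef]
    by_cases h : none ∈ S <;> simp [Set.indicator_apply, h]
  -- mass of the some-part
  have hsome : ∀ Z, Measure.comap Option.some (M₁ Z) Set.univ = M₁ Z ({none}ᶜ) := by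
    intro Z
    rw [measurableEmbedding_some.comap_apply, Set.image_univ, compl_none]
  have hintle : ∀ Z, (∫⁻ o₁, M₂ o₁ Z S ∂(Measure.comap Option.some (M₁ Z)))
      ≤ M₁ Z ({none}ᶜ) := by
    intro Z
    rw [← hsome Z]
    calc ∫⁻ o₁, M₂ o₁ Z S ∂(Measure.comap Option.some (M₁ Z))
        ≤ ∫⁻ _, 1 ∂(Measure.comap Option.some (M₁ Z)) := by
          refine lintegral_mono fun o₁ => ?_
          haveI := hM₂prob o₁ Z
          exact prob_le_one
      _ = _ := by rw [lintegral_one]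
  have hindle : ∀ Z, S.indicator (fun _ => M₁ Z {none}) none ≤ c := by
    intro Z
    rw [hcdef]
    by_cases h : none ∈ S <;> simp [Set.indicator_apply, h, prob_le_one]
  rcases lt_or_ge (M₁ Y' {none}) 1 with hY' | hY'
  · rcases lt_or_ge (M₁ Y {none}) 1 with hY | hY
    · -- main case: both satisfy Ψ₁
      set f : O₁ → ℝ≥0∞ := fun o₁ => M₂ o₁ Y' S with hfdef
      set h : Option O₁ → ℝ≥0∞ := fun x => min 1 (E₂ * Option.elim x c f) with hhdef
      have hhm : Measurable h := by
        apply measurable_of_comp_some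
        exact measurable_const.min ((hM₂meas Y' S hS).const_mul E₂)
      have hh1 : ∀ x, h x ≤ 1 := fun x => min_le_left _ _
      have hpt : ∀ x : Option O₁,
          Option.elim x c (fun o₁ => M₂ o₁ Y S) ≤ h x + ENNReal.ofReal δ₂ := by
        intro x
        cases x with
        | none =>
          refine le_add_right (le_min hc1 ?_)
          calc c = 1 * c := (one_mul c).symm
            _ ≤ E₂ * c := mul_le_mul_left hE₂1 c
        | some o₁ =>
          show M₂ o₁ Y S ≤ min 1 (E₂ * f o₁) + ENNReal.ofReal δ₂
          rcases le_total 1 (E₂ * f o₁) with hm | hm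
          · rw [min_eq_left hm]
            haveI := hM₂prob o₁ Y
            exact le_add_right prob_le_one
          · rw [min_eq_right hm]
            exact hDP₂ o₁ S hS Y Y' hN hY hY'
      calc composeMech M₁ M₂ Y S
          = ∫⁻ x, Option.elim x c (fun o₁ => M₂ o₁ Y S) ∂(M₁ Y) := hexp Y
        _ ≤ ∫⁻ x, (h x + ENNReal.ofReal δ₂) ∂(M₁ Y) := lintegral_mono hpt
        _ = (∫⁻ x, h x ∂(M₁ Y)) + ENNReal.ofReal δ₂ := by
            rw [lintegral_add_right _ measurable_const, lintegral_const, measure_univ, mul_one]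
        _ ≤ (E₁ * ∫⁻ x, h x ∂(M₁ Y') + ENNReal.ofReal δ₁) + ENNReal.ofReal δ₂ := by
            refine add_le_add_left ?_ _
            exact lintegral_le_of_dp (M₁ Y) (M₁ Y') E₁ (ENNReal.ofReal δ₁)
              ENNReal.ofReal_ne_top h hhm hh1 (fun s hs => hDP₁ s hs Y Y' hN)
        _ ≤ (E₁ * (E₂ * composeMech M₁ M₂ Y' S) + ENNReal.ofReal δ₁) + ENNReal.ofReal δ₂ := by
            refine add_le_add_left (add_le_add_left (mul_le_mul_right ?_ E₁) _) _
            calc ∫⁻ x, h x ∂(M₁ Y')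
                ≤ ∫⁻ x, E₂ * Option.elim x c f ∂(M₁ Y') :=
                  lintegral_mono fun x => min_le_right _ _
              _ = E₂ * ∫⁻ x, Option.elim x c f ∂(M₁ Y') :=
                  lintegral_const_mul' _ _ ENNReal.ofReal_ne_top
              _ = E₂ * composeMech M₁ M₂ Y' S := by rw [hexp Y']
        _ = ENNReal.ofReal (Real.exp (ε₁ + ε₂)) * composeMech M₁ M₂ Y' S
              + ENNReal.ofReal (δ₁ + δ₂) := by
            rw [hE₁₂, hδsum, mul_assoc, add_assoc]
    · -- Y surely halts, Y' does not
      have hY1 : M₁ Y {none} = 1 := le_antisymm prob_le_one hY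
      have hYc : M₁ Y ({none}ᶜ) = 0 := by
        rw [measure_compl measurableSet_none' (measure_ne_top _ _), measure_univ, hY1,
          tsub_self]
      have hle : composeMech M₁ M₂ Y S ≤ c := by
        unfold composeMech
        calc S.indicator (fun _ => M₁ Y {none}) none
              + ∫⁻ o₁, M₂ o₁ Y S ∂(Measure.comap Option.some (M₁ Y))
            ≤ c + M₁ Y ({none}ᶜ) := add_le_add (hindle Y) (hintle Y)
          _ = c := by rw [hYc, add_zero]
      by_cases hnS : none ∈ S
      · have hcval : c = 1 := by rw [hcdef, Set.indicator_of_mem hnS]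
        have h1 : (1:ℝ≥0∞) ≤ E₁ * M₁ Y' {none} + ENNReal.ofReal δ₁ := by
          rw [← hY1]
          exact hDP₁ {none} measurableSet_none' Y Y' hN
        have h2 : M₁ Y' {none} ≤ composeMech M₁ M₂ Y' S := by
          unfold composeMech
          refine le_add_right ?_
          rw [Set.indicator_of_mem hnS]
        calc composeMech M₁ M₂ Y S ≤ c := hle
          _ = 1 := hcval
          _ ≤ E₁ * M₁ Y' {none} + ENNReal.ofReal δ₁ := h1
          _ ≤ ENNReal.ofReal (Real.exp (ε₁ + ε₂)) * composeMech M₁ M₂ Y' S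
              + ENNReal.ofReal (δ₁ + δ₂) := by
            refine add_le_add ?_ ?_
            · rw [hE₁₂]
              exact mul_le_mul' (le_mul_of_one_le_right zero_le hE₂1) h2
            · rw [hδsum]; exact le_add_right le_rfl
      · have hcval : c = 0 := by rw [hcdef, Set.indicator_of_notMem hnS]
        calc composeMech M₁ M₂ Y S ≤ c := hle
          _ = 0 := hcval
          _ ≤ _ := zero_le
  · -- Y' surely halts
    have hY'1 : M₁ Y' {none} = 1 := le_antisymm prob_le_one hY'
    have hY'c : M₁ Y' ({none}ᶜ) = 0 := by
      rw [measure_compl measurableSet_none' (measure_ne_top _ _), measure_univ, hY'1,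
        tsub_self]
    have hYc : M₁ Y ({none}ᶜ) ≤ ENNReal.ofReal δ₁ := by
      calc M₁ Y ({none}ᶜ) ≤ E₁ * M₁ Y' ({none}ᶜ) + ENNReal.ofReal δ₁ :=
            hDP₁ _ measurableSet_none'.compl Y Y' hN
        _ = ENNReal.ofReal δ₁ := by rw [hY'c, mul_zero, zero_add]
    have hle : composeMech M₁ M₂ Y S ≤ c + ENNReal.ofReal δ₁ := by
      unfold composeMech
      exact add_le_add (hindle Y) ((hintle Y).trans hYc)
    have hc' : c ≤ composeMech M₁ M₂ Y' S := by
      unfold composeMech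
      refine le_add_right ?_
      rw [hcdef]
      by_cases h : none ∈ S <;> simp [Set.indicator_apply, h, hY'1]
    calc composeMech M₁ M₂ Y S ≤ c + ENNReal.ofReal δ₁ := hle
      _ ≤ ENNReal.ofReal (Real.exp (ε₁ + ε₂)) * composeMech M₁ M₂ Y' S
          + ENNReal.ofReal (δ₁ + δ₂) := by
        refine add_le_add ?_ ?_
        · calc c = 1 * c := (one_mul c).symm
            _ ≤ ENNReal.ofReal (Real.exp (ε₁ + ε₂)) * composeMech M₁ M₂ Y' S := by
              rw [hE₁₂]; exact mul_le_mul' hE₁₂1 hc'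
        · rw [hδsum]; exact le_add_right le_rfl
end
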